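/- (Sommerfeld solution of the Thomas–Fermi differential equation.) The function ψ(x) = γ_TF³ (3/π)² |x|^{-4} satisfies −(1/4π) Δψ(x) = −γ_TF^{-3/2} ψ(x)^{3/2} for every x ∈ ℝ³ \ {0}. Moreover, it is the only power law that does so: if a ∈ ℝ, b > 0 and the function x ↦ b|x|^{-a} satisfies Δ(b|x|^{-a}) = 4π γ_TF^{-3/2} (b|x|^{-a})^{3/2} for all x ≠ 0, then a = 4 and b = γ_TF³ (3/π)². -/

import Mathlib

/-! Away from the origin the Hessian of `‖·‖ ^ p` is `p ‖x‖^(p-2) I + p (p-2) ‖x‖^(p-4) x ⊗ x`,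
so in `ℝ³` the Laplacian of `b ‖x‖^(-a)` is `b a (a-1) ‖x‖^(-a-2)`, while the right-hand side of
the equation is `4π γ^(-3/2) b^(3/2) ‖x‖^(-3a/2)`. Two multiples of powers of `r` agree for all
`r > 0` only if exponents and coefficients agree: the exponents force `a = 4`, and then
`12 b = 4π γ^(-3/2) b^(3/2)` says `√b = 3 γ^(3/2) / π`. -/

open MeasureTheory Real Filter
open scoped ENNReal

noncomputable section

/-- Euclidean space `ℝ³`. -/
abbrev E3 := EuclideanSpace ℝ (Fin 3)

/-- The Thomas–Fermi constant `γ_TF = (6π²/q)^{2/3}/2` for `q` spin states. -/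
def gammaTF (q : ℕ) : ℝ := (6 * Real.pi ^ 2 / q) ^ ((2 : ℝ) / 3) / 2

/-- The Laplacian of `f : ℝ³ → ℝ`, as the sum of the pure second partial derivatives. -/
def lap (f : E3 → ℝ) (x : E3) : ℝ :=
  ∑ i : Fin 3,
    iteratedFDeriv ℝ 2 f x ![EuclideanSpace.single i 1, EuclideanSpace.single i 1]

open InnerProductSpace Laplacian

section NormRpow

variable {E : Type*} [NormedAddCommGroup E] [InnerProductSpace ℝ E]

theorem hasFDerivAt_norm_rpow_of_ne_zero (p : ℝ) {x : E} (hx : x ≠ 0) :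
    HasFDerivAt (fun y : E ↦ ‖y‖ ^ p) ((p * ‖x‖ ^ (p - 2)) • innerSL ℝ x) x := by
  apply HasStrictFDerivAt.hasFDerivAt
  convert! (hasStrictFDerivAt_norm_sq x).rpow_const (p := p / 2) (by simp [hx]) using 0
  simp_rw [← Real.rpow_natCast_mul (norm_nonneg _), ← Nat.cast_smul_eq_nsmul ℝ, smul_smul]
  ring_nf

theorem fderiv_fderiv_norm_rpow_apply (p : ℝ) {x : E} (hx : x ≠ 0) (v w : E) :
    fderiv ℝ (fderiv ℝ fun y : E ↦ ‖y‖ ^ p) x v w =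
      p * ‖x‖ ^ (p - 2) * ⟪v, w⟫_ℝ + p * (p - 2) * ‖x‖ ^ (p - 4) * (⟪x, v⟫_ℝ * ⟪x, w⟫_ℝ) := by
  have hfderiv : fderiv ℝ (fun y : E ↦ ‖y‖ ^ p) =ᶠ[nhds x]
      fun y ↦ (p * ‖y‖ ^ (p - 2)) • innerSL ℝ y := by
    filter_upwards [isOpen_compl_singleton.mem_nhds hx] with y hy
    exact (hasFDerivAt_norm_rpow_of_ne_zero p hy).fderiv
  have hcoeff := (hasFDerivAt_norm_rpow_of_ne_zero (p - 2) hx).const_mul p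
  have hsmul : HasFDerivAt (fun y ↦ (p * ‖y‖ ^ (p - 2)) • innerSL ℝ y) _ x :=
    hcoeff.smul (innerSL ℝ (E := E)).hasFDerivAt
  rw [hfderiv.fderiv_eq, hsmul.fderiv]
  simp only [add_apply, smul_apply, ContinuousLinearMap.smulRight_apply, innerSL_apply_apply,
    smul_eq_mul]
  rw [innerSL_apply_apply]
  ring_nf

theorem laplacian_norm_rpow [FiniteDimensional ℝ E] (p : ℝ) {x : E} (hx : x ≠ 0) :
    Δ (fun y : E ↦ ‖y‖ ^ p) x = p * (p + Module.finrank ℝ E - 2) * ‖x‖ ^ (p - 2) := by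
  let B := stdOrthonormalBasis ℝ E
  have hsq : ∑ i, ⟪x, B i⟫_ℝ * ⟪x, B i⟫_ℝ = ‖x‖ ^ 2 := by
    simpa [real_inner_comm x, real_inner_self_eq_norm_sq] using B.sum_inner_mul_inner x x
  have hpow : ‖x‖ ^ (p - 4) * ‖x‖ ^ 2 = ‖x‖ ^ (p - 2) := by
    rw [← Real.rpow_natCast, ← Real.rpow_add (norm_pos_iff.mpr hx)]
    ring_nf
  rw [laplacian_eq_iteratedFDeriv_orthonormalBasis _ B]
  simp only [iteratedFDeriv_two_apply, Matrix.cons_val_zero, Matrix.cons_val_one,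
    fderiv_fderiv_norm_rpow_apply p hx, Finset.sum_add_distrib, ← Finset.mul_sum, hsq]
  simp only [B.orthonormal.1, real_inner_self_eq_norm_sq, one_pow, Finset.sum_const,
    Finset.card_univ, Fintype.card_fin, nsmul_eq_mul, mul_one]
  linear_combination p * (p - 2) * hpow

end NormRpow

theorem lap_eq_laplacian (f : E3 → ℝ) : lap f = Δ f := by
  rw [laplacian_eq_iteratedFDeriv_orthonormalBasis f (EuclideanSpace.basisFun (Fin 3) ℝ)]
  ext x
  simp [lap]

theorem lap_const_mul_norm_rpow (b p : ℝ) {x : E3} (hx : x ≠ 0) :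
    lap (fun y ↦ b * ‖y‖ ^ p) x = b * (p * (p + 1) * ‖x‖ ^ (p - 2)) := by
  have hsmooth : ContDiffAt ℝ 2 (fun y : E3 ↦ ‖y‖ ^ p) x :=
    (contDiffAt_norm ℝ hx).rpow_const_of_ne (norm_ne_zero_iff.mpr hx)
  rw [lap_eq_laplacian, show (fun y : E3 ↦ b * ‖y‖ ^ p) = b • fun y ↦ ‖y‖ ^ p from rfl,
    laplacian_smul b hsmooth, laplacian_norm_rpow p hx, finrank_euclideanSpace_fin, smul_eq_mul]
  push_cast
  ring

theorem forall_ne_zero_iff_forall_norm_pos {E : Type*} [NormedAddCommGroup E] [NormedSpace ℝ E]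
    [Nontrivial E] {P : ℝ → Prop} : (∀ x : E, x ≠ 0 → P ‖x‖) ↔ ∀ r : ℝ, 0 < r → P r := by
  refine ⟨fun h r hr ↦ ?_, fun h x hx ↦ h _ (norm_pos_iff.mpr hx)⟩
  obtain ⟨x, rfl⟩ := exists_norm_eq E hr.le
  exact h x (norm_pos_iff.mp hr)

theorem forall_mul_rpow_eq_mul_rpow_iff {c d s t : ℝ} (hd : d ≠ 0) :
    (∀ r : ℝ, 0 < r → c * r ^ s = d * r ^ t) ↔ c = d ∧ s = t := by
  refine ⟨fun h ↦ ?_, by rintro ⟨rfl, rfl⟩ _ _; rfl⟩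
  have hcd : c = d := by simpa using h 1 one_pos
  refine ⟨hcd, ?_⟩
  have h2 := h 2 two_pos
  rw [hcd] at h2
  exact (Real.rpow_right_inj two_pos (by norm_num)).mp (mul_left_cancel₀ hd h2)

theorem gammaTF_pos {q : ℕ} (hq : 0 < q) : 0 < gammaTF q := by
  unfold gammaTF
  have : (0 : ℝ) < q := Nat.cast_pos.mpr hq
  positivity

theorem thomasFermi_amplitude_iff {γ b : ℝ} (hγ : 0 < γ) (hb : 0 < b) :
    12 * b = 4 * π * γ ^ (-(3 : ℝ) / 2) * b ^ ((3 : ℝ) / 2) ↔ b = γ ^ 3 * (3 / π) ^ 2 := by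
  have h32 {z : ℝ} (hz : 0 < z) : z ^ ((3 : ℝ) / 2) = z * √z := by
    rw [show (3 : ℝ) / 2 = 1 + 1 / 2 by norm_num, Real.rpow_add hz, Real.rpow_one,
      Real.sqrt_eq_rpow]
  have hfactor : 0 < 4 * b / (γ * √γ) := by positivity
  calc 12 * b = 4 * π * γ ^ (-(3 : ℝ) / 2) * b ^ ((3 : ℝ) / 2)
      ↔ 4 * b / (γ * √γ) * (3 * (γ * √γ)) = 4 * b / (γ * √γ) * (π * √b) := by
        rw [neg_div, Real.rpow_neg hγ.le, h32 hγ, h32 hb,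
          show 12 * b = 4 * b / (γ * √γ) * (3 * (γ * √γ)) by field_simp; ring,
          show 4 * π * (γ * √γ)⁻¹ * (b * √b) = 4 * b / (γ * √γ) * (π * √b) by ring]
    _ ↔ √b = 3 * (γ * √γ) / π := by
        rw [mul_right_inj' hfactor.ne', eq_div_iff pi_ne_zero, eq_comm, mul_comm]
    _ ↔ b = γ ^ 3 * (3 / π) ^ 2 := by
        rw [Real.sqrt_eq_iff_eq_sq hb.le (by positivity), div_pow, mul_pow, mul_pow,
          Real.sq_sqrt hγ.le]
        ring_nf

theorem powerLaw_solves_thomasFermi_iff {γ a b : ℝ} (hγ : 0 < γ) (hb : 0 < b) :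
    (∀ x : E3, x ≠ 0 →
      lap (fun y ↦ b * ‖y‖ ^ (-a)) x
        = 4 * π * γ ^ (-(3 : ℝ) / 2) * (b * ‖x‖ ^ (-a)) ^ ((3 : ℝ) / 2)) ↔
      a = 4 ∧ b = γ ^ 3 * (3 / π) ^ 2 := by
  have hrhs (r : ℝ) (hr : 0 ≤ r) :
      (b * r ^ (-a)) ^ ((3 : ℝ) / 2) = b ^ ((3 : ℝ) / 2) * r ^ (-a * (3 / 2)) := by
    rw [Real.mul_rpow hb.le (by positivity), ← Real.rpow_mul hr]
  have hK : 0 < 4 * π * γ ^ (-(3 : ℝ) / 2) * b ^ ((3 : ℝ) / 2) := by positivity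
  calc _ ↔ ∀ r : ℝ, 0 < r → b * -a * (-a + 1) * r ^ (-a - 2)
        = 4 * π * γ ^ (-(3 : ℝ) / 2) * b ^ ((3 : ℝ) / 2) * r ^ (-a * (3 / 2)) := by
        rw [← forall_ne_zero_iff_forall_norm_pos (E := E3)]
        refine forall₂_congr fun x hx ↦ ?_
        rw [lap_const_mul_norm_rpow b (-a) hx, hrhs _ (norm_nonneg x)]
        simp only [mul_assoc]
    _ ↔ b * -a * (-a + 1) = 4 * π * γ ^ (-(3 : ℝ) / 2) * b ^ ((3 : ℝ) / 2) ∧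
          -a - 2 = -a * (3 / 2) :=
        forall_mul_rpow_eq_mul_rpow_iff hK.ne'
    _ ↔ a = 4 ∧ b = γ ^ 3 * (3 / π) ^ 2 := by
        rw [← thomasFermi_amplitude_iff hγ hb]
        constructor
        · rintro ⟨hcoeff, hexp⟩
          obtain rfl : a = 4 := by linarith
          exact ⟨rfl, by linarith⟩
        · rintro ⟨rfl, hcoeff⟩
          exact ⟨by linarith, by norm_num⟩

/-- The Sommerfeld solution: `ψ(x) = γ_TF³ (3/π)² |x|^{−4}` solves the neutral
Thomas–Fermi differential equation `−(1/4π)Δψ = −γ_TF^{−3/2} ψ^{3/2}` away from the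
origin, and it is the only power law `b|x|^{−a}` (with `b > 0`) that does so. -/
theorem sommerfeld_solution (q : ℕ) (hq : 0 < q) :
    (∀ x : E3, x ≠ 0 →
      -(1 / (4 * Real.pi)) *
          lap (fun y => gammaTF q ^ 3 * (3 / Real.pi) ^ 2 * ‖y‖ ^ (-(4 : ℝ))) x
        = -(gammaTF q ^ (-(3 : ℝ) / 2)) *
            (gammaTF q ^ 3 * (3 / Real.pi) ^ 2 * ‖x‖ ^ (-(4 : ℝ))) ^ ((3 : ℝ) / 2)) ∧
    (∀ a b : ℝ, 0 < b →
      (∀ x : E3, x ≠ 0 →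
        lap (fun y => b * ‖y‖ ^ (-a)) x
          = 4 * Real.pi * gammaTF q ^ (-(3 : ℝ) / 2) * (b * ‖x‖ ^ (-a)) ^ ((3 : ℝ) / 2)) →
      a = 4 ∧ b = gammaTF q ^ 3 * (3 / Real.pi) ^ 2) := by
  have hγ := gammaTF_pos hq
  refine ⟨fun x hx ↦ ?_, fun a b hb ↦ (powerLaw_solves_thomasFermi_iff hγ hb).mp⟩
  have hsolves := (powerLaw_solves_thomasFermi_iff hγ (by positivity)).mpr ⟨rfl, rfl⟩ x hx
  rw [hsolves]
  field_simp

end
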